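/- arXiv:2309.16115 — 9 statements merged into one kernel-verified Lean document; each statement's English description precedes it below -/
import Mathlib

section
/- In the two-model observation model, the posterior obtained by conditioning on y1 = 1 and y2 = 2 is the normalized harmonic mean of p1 and p2: for every x ∈ X, p̃(x | y1 = 1, y2 = 2) = [p1(x)p2(x)/(p1(x)+p2(x))] / Σ_{x'∈X} [p1(x')p2(x')/(p1(x')+p2(x'))]. -/
open Finset

-- Both sides are `0` when `a + b = 0`, by the convention `x / 0 = 0`.
theorem add_div_mul_div_add_mul_div_add {K : Type*} [Field K] (a b c : K) :
    (a + b) / c * (a / (a + b)) * (b / (a + b)) = a * b / (a + b) / c := by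
  rcases eq_or_ne (a + b) 0 with h | h
  · simp [h]
  · field_simp

theorem harmonic_mean_posterior_general
    {X : Type*} [Fintype X] (p1 p2 : X → ℝ) :
    ∀ x : X,
      ((p1 x + p2 x) / 2 * (p1 x / (p1 x + p2 x)) * (p2 x / (p1 x + p2 x))) /
          (∑ x', (p1 x' + p2 x') / 2 * (p1 x' / (p1 x' + p2 x')) *
            (p2 x' / (p1 x' + p2 x'))) =
        (p1 x * p2 x / (p1 x + p2 x)) /
          (∑ x', p1 x' * p2 x' / (p1 x' + p2 x')) := by
  intro x
  simp only [add_div_mul_div_add_mul_div_add]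
  rw [← sum_div, div_div_div_cancel_right₀ two_ne_zero]

/-- In the two-model observation model with prior
`p̃(x) = (p1 x + p2 x)/2` and likelihoods `p̃(y_k = i | x) = p_i x / (p1 x + p2 x)`
(with the convention that ratios with zero denominator are `0`, which is the
Lean convention for real division), the posterior obtained by conditioning on
`y1 = 1` and `y2 = 2` equals the normalized harmonic mean of `p1` and `p2`. -/
theorem harmonic_mean_posterior
    {X : Type*} [Fintype X] [Nonempty X] (p1 p2 : X → ℝ)
    (h1nn : ∀ x, 0 ≤ p1 x) (h2nn : ∀ x, 0 ≤ p2 x)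
    (h1sum : ∑ x, p1 x = 1) (h2sum : ∑ x, p2 x = 1)
    (hsupp : ∃ x, 0 < p1 x ∧ 0 < p2 x) :
    ∀ x : X,
      ((p1 x + p2 x) / 2 * (p1 x / (p1 x + p2 x)) * (p2 x / (p1 x + p2 x))) /
          (∑ x', (p1 x' + p2 x') / 2 * (p1 x' / (p1 x' + p2 x')) *
            (p2 x' / (p1 x' + p2 x'))) =
        (p1 x * p2 x / (p1 x + p2 x)) /
          (∑ x', p1 x' * p2 x' / (p1 x' + p2 x')) :=
  harmonic_mean_posterior_general p1 p2
end

section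
/- In the two-model observation model, the posterior obtained by conditioning on y1 = 1 and y2 = 1 is the normalized contrast of p1 with p2: for every x ∈ X, p̃(x | y1 = 1, y2 = 1) = [p1(x)²/(p1(x)+p2(x))] / Σ_{x'∈X} [p1(x')²/(p1(x')+p2(x'))]. -/
open Finset

/-! The prior weight `(p1 x + p2 x) / 2` cancels one of the two likelihood denominators,
leaving `p1 x ^ 2 / (p1 x + p2 x) / 2`, and the constant `1 / 2` cancels on normalizing.
Where `p1 x + p2 x = 0` both sides vanish under the convention `t / 0 = 0`. -/

theorem mul_div_self_mul_div_self {K : Type*} [Field K] (a c : K) :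
    c * (a / c) * (a / c) = a ^ 2 / c := by
  rcases eq_or_ne c 0 with rfl | hc
  · simp
  · field_simp

theorem div_const_div_sum_div_const {ι K : Type*} [Fintype ι] [Field K] (g : ι → K) {r : K}
    (hr : r ≠ 0) (i : ι) : g i / r / ∑ j, g j / r = g i / ∑ j, g j := by
  rw [← Finset.sum_div, div_div_div_cancel_right₀ hr]

theorem contrast_posterior_general
    {X : Type*} [Fintype X] (p1 p2 : X → ℝ) :
    ∀ x : X,
      ((p1 x + p2 x) / 2 * (p1 x / (p1 x + p2 x)) * (p1 x / (p1 x + p2 x))) /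
          (∑ x', (p1 x' + p2 x') / 2 * (p1 x' / (p1 x' + p2 x')) *
            (p1 x' / (p1 x' + p2 x'))) =
        ((p1 x) ^ 2 / (p1 x + p2 x)) /
          (∑ x', (p1 x') ^ 2 / (p1 x' + p2 x')) := by
  have joint : ∀ x, (p1 x + p2 x) / 2 * (p1 x / (p1 x + p2 x)) * (p1 x / (p1 x + p2 x)) =
      p1 x ^ 2 / (p1 x + p2 x) / 2 := fun x => by
    rw [← mul_div_self_mul_div_self (p1 x) (p1 x + p2 x)]
    ring
  simp only [joint]
  exact div_const_div_sum_div_const _ two_ne_zero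

/-- In the two-model observation model with prior
`p̃(x) = (p1 x + p2 x)/2` and likelihoods `p̃(y_k = i | x) = p_i x / (p1 x + p2 x)`
(ratios with zero denominator are `0`, matching Lean's real division), the
posterior obtained by conditioning on `y1 = 1` and `y2 = 1` equals the
normalized contrast of `p1` with `p2`. -/
theorem contrast_posterior
    {X : Type*} [Fintype X] [Nonempty X] (p1 p2 : X → ℝ)
    (h1nn : ∀ x, 0 ≤ p1 x) (h2nn : ∀ x, 0 ≤ p2 x)
    (h1sum : ∑ x, p1 x = 1) (h2sum : ∑ x, p2 x = 1) :
    ∀ x : X,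
      ((p1 x + p2 x) / 2 * (p1 x / (p1 x + p2 x)) * (p1 x / (p1 x + p2 x))) /
          (∑ x', (p1 x' + p2 x') / 2 * (p1 x' / (p1 x' + p2 x')) *
            (p1 x' / (p1 x' + p2 x'))) =
        ((p1 x) ^ 2 / (p1 x + p2 x)) /
          (∑ x', (p1 x') ^ 2 / (p1 x' + p2 x')) :=
  contrast_posterior_general p1 p2
end

section
/- In the α-parameterized two-model observation model, conditioning on y1 = 1 and y2 = 2 gives the harmonic interpolation: for every x ∈ X, p̃(x | y1 = 1, y2 = 2; α) = [p1(x)p2(x)/(α p1(x) + (1−α) p2(x))] / Σ_{x'∈X} [p1(x')p2(x')/(α p1(x') + (1−α) p2(x'))]. -/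
/-! The prior times the first likelihood collapses to `p1 x / 2`, so the joint weight of
`(x, y1 = 1, y2 = 2)` is the harmonic weight `p1 x p2 x / (α p1 x + (1-α) p2 x)` times the
constant `(1-α)/2`, which cancels when the posterior is normalized. -/

open Finset

theorem mul_div_sum_mul_left {ι K : Type*} [Field K] (s : Finset ι) (f : ι → K) {c : K}
    (hc : c ≠ 0) (i : ι) :
    c * f i / ∑ j ∈ s, c * f j = f i / ∑ j ∈ s, f j := by
  rw [← mul_sum, mul_div_mul_left _ _ hc]

theorem add_div_two_mul_div_add {K : Type*} [Field K] [LinearOrder K] [IsStrictOrderedRing K]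
    {a b : K} (ha : 0 ≤ a) (hb : 0 ≤ b) :
    (a + b) / 2 * (a / (a + b)) = a / 2 := by
  rcases ha.eq_or_lt with rfl | ha
  · simp
  · have hab : a + b ≠ 0 := by positivity
    field_simp

theorem harmonic_interpolation_posterior_general
    {X : Type*} [Fintype X] (p1 p2 : X → ℝ)
    (h1nn : ∀ x, 0 ≤ p1 x) (h2nn : ∀ x, 0 ≤ p2 x)
    (α : ℝ) (hα : α ∈ Set.Ioo (0 : ℝ) 1) :
    ∀ x : X,
      ((p1 x + p2 x) / 2 * (p1 x / (p1 x + p2 x)) *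
            ((1 - α) * p2 x / (α * p1 x + (1 - α) * p2 x))) /
          (∑ x', (p1 x' + p2 x') / 2 * (p1 x' / (p1 x' + p2 x')) *
            ((1 - α) * p2 x' / (α * p1 x' + (1 - α) * p2 x'))) =
        (p1 x * p2 x / (α * p1 x + (1 - α) * p2 x)) /
          (∑ x', p1 x' * p2 x' / (α * p1 x' + (1 - α) * p2 x')) := by
  have hjoint : ∀ x,
      (p1 x + p2 x) / 2 * (p1 x / (p1 x + p2 x)) *
          ((1 - α) * p2 x / (α * p1 x + (1 - α) * p2 x)) =
        (1 - α) / 2 * (p1 x * p2 x / (α * p1 x + (1 - α) * p2 x)) := fun x => by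
    rw [add_div_two_mul_div_add (h1nn x) (h2nn x)]
    ring
  have hc : (1 - α) / 2 ≠ 0 := by linarith [hα.2]
  intro x
  simp only [hjoint]
  exact mul_div_sum_mul_left univ (fun x => p1 x * p2 x / (α * p1 x + (1 - α) * p2 x)) hc x

/-- In the `α`-parameterized two-model observation model with prior
`p̃(x) = (p1 x + p2 x)/2`, first likelihood `p̃(y1 = i | x) = p_i x / (p1 x + p2 x)` and
second likelihood `p̃(y2 = 2 | x; α) = (1-α) p2 x / (α p1 x + (1-α) p2 x)`
(ratios with zero denominator are `0`), conditioning on `y1 = 1` and `y2 = 2`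
gives the harmonic interpolation of `p1` and `p2`. -/
theorem harmonic_interpolation_posterior
    {X : Type*} [Fintype X] [Nonempty X] (p1 p2 : X → ℝ)
    (h1nn : ∀ x, 0 ≤ p1 x) (h2nn : ∀ x, 0 ≤ p2 x)
    (h1sum : ∑ x, p1 x = 1) (h2sum : ∑ x, p2 x = 1)
    (hsupp : ∃ x, 0 < p1 x ∧ 0 < p2 x)
    (α : ℝ) (hα : α ∈ Set.Ioo (0 : ℝ) 1) :
    ∀ x : X,
      ((p1 x + p2 x) / 2 * (p1 x / (p1 x + p2 x)) *
            ((1 - α) * p2 x / (α * p1 x + (1 - α) * p2 x))) /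
          (∑ x', (p1 x' + p2 x') / 2 * (p1 x' / (p1 x' + p2 x')) *
            ((1 - α) * p2 x' / (α * p1 x' + (1 - α) * p2 x'))) =
        (p1 x * p2 x / (α * p1 x + (1 - α) * p2 x)) /
          (∑ x', p1 x' * p2 x' / (α * p1 x' + (1 - α) * p2 x')) :=
  harmonic_interpolation_posterior_general p1 p2 h1nn h2nn α hα
end

section
/- In the α-parameterized two-model observation model, conditioning on y1 = 1 and y2 = 1 gives the parameterized contrast: for every x ∈ X, p̃(x | y1 = 1, y2 = 1; α) = [p1(x)²/(α p1(x) + (1−α) p2(x))] / Σ_{x'∈X} [p1(x')²/(α p1(x') + (1−α) p2(x'))]. -/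
/-!
Each joint weight `p̃(x) p̃(y1 = 1 | x) p̃(y2 = 1 | x; α)` equals `α / 2` times the contrast weight
`p1 x ^ 2 / (α p1 x + (1 - α) p2 x)`, also where `p1 x + p2 x = 0` (there `p1 x = 0` by
nonnegativity), and the constant `α / 2` cancels on normalisation.
-/

open Finset

theorem add_mul_div_add_of_nonneg {a b : ℝ} (ha : 0 ≤ a) (hb : 0 ≤ b) :
    (a + b) * (a / (a + b)) = a := by
  rcases (add_nonneg ha hb).eq_or_lt with hab | hab
  · have ha0 : a = 0 := by linarith
    simp [ha0]
  · exact mul_div_cancel₀ a hab.ne'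

theorem parameterized_contrast_posterior_general
    {X : Type*} [Fintype X] (p1 p2 : X → ℝ)
    (h1nn : ∀ x, 0 ≤ p1 x) (h2nn : ∀ x, 0 ≤ p2 x)
    (α : ℝ) (hα : α ∈ Set.Ioo (0 : ℝ) 1) :
    ∀ x : X,
      ((p1 x + p2 x) / 2 * (p1 x / (p1 x + p2 x)) *
            (α * p1 x / (α * p1 x + (1 - α) * p2 x))) /
          (∑ x', (p1 x' + p2 x') / 2 * (p1 x' / (p1 x' + p2 x')) *
            (α * p1 x' / (α * p1 x' + (1 - α) * p2 x'))) =
        ((p1 x) ^ 2 / (α * p1 x + (1 - α) * p2 x)) /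
          (∑ x', (p1 x') ^ 2 / (α * p1 x' + (1 - α) * p2 x')) := by
  have hjoint : ∀ x,
      (p1 x + p2 x) / 2 * (p1 x / (p1 x + p2 x)) * (α * p1 x / (α * p1 x + (1 - α) * p2 x)) =
        α / 2 * (p1 x ^ 2 / (α * p1 x + (1 - α) * p2 x)) := fun x => by
    rw [div_mul_eq_mul_div₀, add_mul_div_add_of_nonneg (h1nn x) (h2nn x)]
    ring
  intro x
  simp only [hjoint]
  exact mul_div_sum_mul_left univ (fun x => p1 x ^ 2 / (α * p1 x + (1 - α) * p2 x))
    (half_pos hα.1).ne' x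

/-- In the `α`-parameterized two-model observation model with prior
`p̃(x) = (p1 x + p2 x)/2`, first likelihood `p̃(y1 = i | x) = p_i x / (p1 x + p2 x)` and
second likelihood `p̃(y2 = 1 | x; α) = α p1 x / (α p1 x + (1-α) p2 x)`
(ratios with zero denominator are `0`), conditioning on `y1 = 1` and `y2 = 1`
gives the parameterized contrast of `p1` with `p2`. -/
theorem parameterized_contrast_posterior
    {X : Type*} [Fintype X] [Nonempty X] (p1 p2 : X → ℝ)
    (h1nn : ∀ x, 0 ≤ p1 x) (h2nn : ∀ x, 0 ≤ p2 x)
    (h1sum : ∑ x, p1 x = 1) (h2sum : ∑ x, p2 x = 1)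
    (hp1ne : ∃ x, p1 x ≠ 0)
    (α : ℝ) (hα : α ∈ Set.Ioo (0 : ℝ) 1) :
    ∀ x : X,
      ((p1 x + p2 x) / 2 * (p1 x / (p1 x + p2 x)) *
            (α * p1 x / (α * p1 x + (1 - α) * p2 x))) /
          (∑ x', (p1 x' + p2 x') / 2 * (p1 x' / (p1 x' + p2 x')) *
            (α * p1 x' / (α * p1 x' + (1 - α) * p2 x'))) =
        ((p1 x) ^ 2 / (α * p1 x + (1 - α) * p2 x)) /
          (∑ x', (p1 x') ^ 2 / (α * p1 x' + (1 - α) * p2 x')) :=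
  parameterized_contrast_posterior_general p1 p2 h1nn h2nn α hα
end

section
/- In the m-model, n-observation model, the posterior over x given observations y1 = i1, …, yn = in is, for every x ∈ X, p̃(x | y1 = i1, …, yn = in) = [ (Π_{k=1}^n p_{i_k}(x)) / (Σ_{j=1}^m p_j(x))^{n−1} ] / Σ_{x'∈X} [ (Π_{k=1}^n p_{i_k}(x')) / (Σ_{j=1}^m p_j(x'))^{n−1} ]. -/
/-!
The prior weight `∑ j, p j x` cancels one of the `n` denominators of the likelihoods, and the
constant `1 / m` cancels in the normalisation. Where `∑ j, p j x = 0` every `p i x` vanishes, so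
with the convention `t / 0 = 0` both unnormalised weights are `0`.
-/

open Finset

theorem mul_prod_div_eq_prod_div_pow {ι K : Type*} [Field K] {s : Finset ι} (hs : s.Nonempty)
    (a : ι → K) {S : K} (h : S = 0 → ∏ k ∈ s, a k = 0) :
    S * ∏ k ∈ s, a k / S = (∏ k ∈ s, a k) / S ^ (#s - 1) := by
  by_cases hS : S = 0
  · simp [hS, h hS]
  · have hcard : S ^ #s = S * S ^ (#s - 1) := by
      rw [← pow_succ', Nat.sub_add_cancel hs.card_pos]
    rw [prod_div_distrib, prod_const, hcard, ← mul_div_assoc, mul_div_mul_left _ _ hS]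

theorem prod_eq_zero_of_sum_eq_zero {ι κ R : Type*} [CommSemiring R] [PartialOrder R]
    [IsOrderedAddMonoid R] [Fintype κ] {s : Finset ι} (hs : s.Nonempty) {p : κ → R}
    (hp : ∀ j, 0 ≤ p j) (σ : ι → κ) (h : ∑ j, p j = 0) :
    ∏ k ∈ s, p (σ k) = 0 := by
  obtain ⟨k, hk⟩ := hs
  exact prod_eq_zero hk ((sum_eq_zero_iff_of_nonneg fun j _ => hp j).1 h _ (mem_univ _))

theorem composition_posterior_general
    {X : Type*} [Fintype X] (m n : ℕ) (hm : 0 < m) (hn : 0 < n)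
    (p : Fin m → X → ℝ)
    (hnn : ∀ i x, 0 ≤ p i x)
    (ι : Fin n → Fin m) :
    ∀ x : X,
      (((1 / (m : ℝ)) * ∑ j, p j x) * ∏ k, (p (ι k) x / ∑ j, p j x)) /
          (∑ x', ((1 / (m : ℝ)) * ∑ j, p j x') * ∏ k, (p (ι k) x' / ∑ j, p j x')) =
        ((∏ k, p (ι k) x) / (∑ j, p j x) ^ (n - 1)) /
          (∑ x', (∏ k, p (ι k) x') / (∑ j, p j x') ^ (n - 1)) := by
  have huniv : (univ : Finset (Fin n)).Nonempty := univ_nonempty_iff.2 ⟨⟨0, hn⟩⟩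
  have joint : ∀ x : X,
      ((1 / (m : ℝ)) * ∑ j, p j x) * ∏ k, (p (ι k) x / ∑ j, p j x)
        = (1 / (m : ℝ)) * ((∏ k, p (ι k) x) / (∑ j, p j x) ^ (n - 1)) := fun x => by
    rw [mul_assoc, mul_prod_div_eq_prod_div_pow huniv _
      (prod_eq_zero_of_sum_eq_zero huniv (hnn · x) ι), card_univ, Fintype.card_fin]
  intro x
  rw [joint x, sum_congr rfl fun x' _ => joint x', ← mul_sum,
    mul_div_mul_left _ _ (by positivity)]

/-- In the `m`-model, `n`-observation model with prior
`p̃(x) = (1/m) ∑ j, p j x` and likelihoods `p̃(y_k = i | x) = p i x / ∑ j, p j x`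
(ratios with zero denominator are `0`), the posterior over `x` given the
observations `y_k = ι k` for `k = 1, …, n` is the normalized composition
`(∏ k, p (ι k) x) / (∑ j, p j x)^(n-1)`. -/
theorem composition_posterior
    {X : Type*} [Fintype X] [Nonempty X] (m n : ℕ) (hm : 0 < m) (hn : 0 < n)
    (p : Fin m → X → ℝ)
    (hnn : ∀ i x, 0 ≤ p i x) (hsum : ∀ i, ∑ x, p i x = 1)
    (ι : Fin n → Fin m)
    (hZ : 0 < ∑ x, (∏ k, p (ι k) x) / (∑ j, p j x) ^ (n - 1)) :
    ∀ x : X,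
      (((1 / (m : ℝ)) * ∑ j, p j x) * ∏ k, (p (ι k) x / ∑ j, p j x)) /
          (∑ x', ((1 / (m : ℝ)) * ∑ j, p j x') * ∏ k, (p (ι k) x' / ∑ j, p j x')) =
        ((∏ k, p (ι k) x) / (∑ j, p j x) ^ (n - 1)) /
          (∑ x', (∏ k, p (ι k) x') / (∑ j, p j x') ^ (n - 1)) :=
  composition_posterior_general m n hm hn p hnn ι
end

section
/- (GFlowNet mixture policy.) Let p_{1,F}, …, p_{m,F} be forward policies on a common GFlowNet domain with induced state-visitation functions p_1, …, p_m, and let ω_1, …, ω_m ≥ 0 with Σ_i ω_i = 1 satisfy Σ_j ω_j p_j(s) > 0 for every state s. Define the mixture policy p_{M,F}(s' | s) = Σ_{i=1}^m [ω_i p_i(s) / Σ_{j=1}^m ω_j p_j(s)] p_{i,F}(s' | s). Then the state-visitation function p_M induced by p_{M,F} satisfies p_M(s) = Σ_{i=1}^m ω_i p_i(s) for every state s; in particular the distribution over terminal states induced by p_{M,F} is the mixture Σ_i ω_i p_i(x). -/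
open Finset

/-- A state is terminal if it has no outgoing edges. -/
def IsTerminal {S : Type*} (A : S → S → Prop) (s : S) : Prop := ∀ s', ¬ A s s'

/-- A GFlowNet domain: a finite set of states with an edge relation `A` whose
transitive closure is irreflexive (a DAG), an initial state `s0` with no
incoming edges, and `s0` not terminal. -/
def IsGFlowNetDomain {S : Type*} [Fintype S] (A : S → S → Prop) (s0 : S) : Prop :=
  Irreflexive (Relation.TransGen A) ∧ (∀ s, ¬ A s s0) ∧ ¬ IsTerminal A s0

/-- A forward policy: nonnegative, supported on edges, and summing to one over
the successors of every non-terminal state. -/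
def IsForwardPolicy {S : Type*} [Fintype S] (A : S → S → Prop) [DecidableRel A]
    (pF : S → S → ℝ) : Prop :=
  (∀ s s', 0 ≤ pF s s') ∧ (∀ s s', ¬ A s s' → pF s s' = 0) ∧
    (∀ s, ¬ IsTerminal A s → ∑ s' ∈ univ.filter (fun s' => A s s'), pF s s' = 1)

/-- The state-visitation function induced by a forward policy: `p s0 = 1` and
`p s = ∑_{s* : (s*,s) ∈ A} p s* * pF s* s` for every `s ≠ s0`. -/
def IsVisitation {S : Type*} [Fintype S] (A : S → S → Prop) [DecidableRel A]
    (s0 : S) (pF : S → S → ℝ) (p : S → ℝ) : Prop :=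
  p s0 = 1 ∧
    ∀ s, s ≠ s0 → p s = ∑ sp ∈ univ.filter (fun sp => A sp s), p sp * pF sp s

/-!
The unnormalised mixture `s ↦ ∑ i, ω i * p i s` satisfies the visitation recursion of the
mixture policy: multiplying the policy at `s*` by the normaliser `∑ j, ω j * p j s*` cancels
its denominator, and what remains is the `ω`-combination of the recursions of the `p i`.
A visitation function is unique, since the recursion determines it by well-founded induction
along the acyclic edge relation.
-/

theorem IsGFlowNetDomain.wellFounded {S : Type*} [Fintype S] {A : S → S → Prop} {s0 : S}
    (hdom : IsGFlowNetDomain A s0) : WellFounded A :=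
  have : IsTrans S (Relation.TransGen A) := ⟨fun _ _ _ => Relation.TransGen.trans⟩
  have : Std.Irrefl (Relation.TransGen A) := ⟨hdom.1⟩
  (Finite.wellFounded_of_trans_of_irrefl _).mono fun _ _ => Relation.TransGen.single

section Visitation

variable {S : Type*} {m : ℕ}

noncomputable def mixturePolicy (ω : Fin m → ℝ) (p : Fin m → S → ℝ) (pF : Fin m → S → S → ℝ) :
    S → S → ℝ :=
  fun s s' => ∑ i, (ω i * p i s / ∑ j, ω j * p j s) * pF i s s'

theorem mul_mixturePolicy {ω : Fin m → ℝ} {p : Fin m → S → ℝ} (pF : Fin m → S → S → ℝ)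
    {s : S} (hs : ∑ j, ω j * p j s ≠ 0) (s' : S) :
    (∑ j, ω j * p j s) * mixturePolicy ω p pF s s' = ∑ i, ω i * p i s * pF i s s' := by
  rw [mixturePolicy, mul_sum]
  refine sum_congr rfl fun i _ => ?_
  field_simp

variable [Fintype S] {A : S → S → Prop} [DecidableRel A] {s0 : S}

theorem IsVisitation.unique (hwf : WellFounded A) {pF : S → S → ℝ} {p q : S → ℝ}
    (hp : IsVisitation A s0 pF p) (hq : IsVisitation A s0 pF q) : p = q := by
  funext s
  induction s using hwf.induction with
  | _ s ih =>
    by_cases hs : s = s0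
    · rw [hs, hp.1, hq.1]
    · rw [hp.2 s hs, hq.2 s hs]
      exact sum_congr rfl fun sp hsp => by rw [ih sp (mem_filter.mp hsp).2]

theorem isVisitation_mixture {ω : Fin m → ℝ} {p : Fin m → S → ℝ} {pF : Fin m → S → S → ℝ}
    (hp : ∀ i, IsVisitation A s0 (pF i) (p i)) (hωsum : ∑ i, ω i = 1)
    (hne : ∀ s, ∑ j, ω j * p j s ≠ 0) :
    IsVisitation A s0 (mixturePolicy ω p pF) fun s => ∑ i, ω i * p i s := by
  refine ⟨by simp only [fun i => (hp i).1, mul_one, hωsum], fun s hs => ?_⟩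
  calc ∑ i, ω i * p i s
      = ∑ i, ∑ sp ∈ univ.filter (A · s), ω i * p i sp * pF i sp s := by
        refine sum_congr rfl fun i _ => ?_
        rw [(hp i).2 s hs, mul_sum]
        exact sum_congr rfl fun sp _ => by ring
    _ = ∑ sp ∈ univ.filter (A · s), (∑ j, ω j * p j sp) * mixturePolicy ω p pF sp s := by
        rw [sum_comm]
        exact sum_congr rfl fun sp _ => (mul_mixturePolicy pF (hne sp) s).symm

end Visitation

theorem gflownet_mixture_policy_general
    {S : Type*} [Fintype S] (A : S → S → Prop) [DecidableRel A] (s0 : S)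
    (hdom : IsGFlowNetDomain A s0)
    (m : ℕ) (pF : Fin m → S → S → ℝ) (p : Fin m → S → ℝ)
    (hp : ∀ i, IsVisitation A s0 (pF i) (p i))
    (ω : Fin m → ℝ) (hωsum : ∑ i, ω i = 1)
    (hpos : ∀ s, 0 < ∑ j, ω j * p j s)
    (pM : S → ℝ)
    (hpM : IsVisitation A s0
      (fun s s' => ∑ i, (ω i * p i s / ∑ j, ω j * p j s) * pF i s s') pM) :
    ∀ s, pM s = ∑ i, ω i * p i s := by
  intro s
  have hmix : IsVisitation A s0 (mixturePolicy ω p pF) fun s => ∑ i, ω i * p i s :=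
    isVisitation_mixture hp hωsum fun s => (hpos s).ne'
  exact congrFun (IsVisitation.unique hdom.wellFounded hpM hmix) s

/-- **GFlowNet mixture policy, Proposition 1.**
If forward policies `pF i` induce state-visitation functions `p i`, and
`ω` are mixture weights with `∑ j, ω j * p j s > 0` for every state, then the
mixture policy `p_{M,F}(s' | s) = ∑ i, (ω i * p i s / ∑ j, ω j * p j s) * pF i s s'`
induces the state-visitation function `s ↦ ∑ i, ω i * p i s`; in particular,
the induced distribution over terminal states is the mixture `∑ i, ω i * p i x`. -/
theorem gflownet_mixture_policy
    {S : Type*} [Fintype S] (A : S → S → Prop) [DecidableRel A] (s0 : S)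
    (hdom : IsGFlowNetDomain A s0)
    (m : ℕ) (pF : Fin m → S → S → ℝ) (p : Fin m → S → ℝ)
    (hpF : ∀ i, IsForwardPolicy A (pF i))
    (hp : ∀ i, IsVisitation A s0 (pF i) (p i))
    (ω : Fin m → ℝ) (hω : ∀ i, 0 ≤ ω i) (hωsum : ∑ i, ω i = 1)
    (hpos : ∀ s, 0 < ∑ j, ω j * p j s)
    (pM : S → ℝ)
    (hpM : IsVisitation A s0
      (fun s s' => ∑ i, (ω i * p i s / ∑ j, ω j * p j s) * pF i s s') pM) :
    ∀ s, pM s = ∑ i, ω i * p i s :=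
  gflownet_mixture_policy_general A s0 hdom m pF p hp ω hωsum hpos pM hpM
end

section
/- (GFlowNet classifier consistency, Proposition 2 claim 1.) Let p_F be a forward policy on a GFlowNet domain with induced state-visitation function p satisfying p(s) > 0 for all s, let p_B be a backward policy satisfying the detailed balance condition p(s) p_F(s' | s) = p(s') p_B(s | s') for every edge (s, s') ∈ A, and let Y be a finite label set with terminal conditionals q(y | x) ≥ 0 for x ∈ X. Define the joint state–label function P(s, y) by P(x, y) = p(x) q(y | x) for terminal x ∈ X and P(s, y) = Σ_{s' : (s,s')∈A} p_B(s | s') P(s', y) for non-terminal s. Then the conditional P(y | s) := P(s, y)/p(s) satisfies, for every non-terminal state s and every y ∈ Y, P(y | s) = Σ_{s' : (s,s')∈A} p_F(s' | s) P(y | s'). -/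
open Finset

theorem sum_mul_div_eq_sum_mul_div_of_balance {ι : Type*} (t : Finset ι) {a : ℝ} (ha : a ≠ 0)
    {w b f x : ι → ℝ} (hw : ∀ i ∈ t, w i ≠ 0) (hbal : ∀ i ∈ t, a * f i = w i * b i) :
    (∑ i ∈ t, b i * x i) / a = ∑ i ∈ t, f i * (x i / w i) := by
  rw [sum_div]
  refine sum_congr rfl fun i hi => ?_
  have hwi := hw i hi
  field_simp
  linear_combination -x i * hbal i hi

theorem gflownet_classifier_consistency_general
    {S Y : Type*} [Fintype S]
    (A : S → S → Prop) [DecidableRel A]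
    (pF : S → S → ℝ)
    (p : S → ℝ) (hppos : ∀ s, 0 < p s)
    (pB : S → S → ℝ)
    (hdb : ∀ s s', A s s' → p s * pF s s' = p s' * pB s' s)
    (P : S → Y → ℝ)
    (hPrec : ∀ s y, ¬ IsTerminal A s →
      P s y = ∑ s' ∈ univ.filter (fun s' => A s s'), pB s' s * P s' y) :
    ∀ s y, ¬ IsTerminal A s →
      P s y / p s =
        ∑ s' ∈ univ.filter (fun s' => A s s'), pF s s' * (P s' y / p s') := by
  intro s y hs
  rw [hPrec s y hs]
  exact sum_mul_div_eq_sum_mul_div_of_balance _ (hppos s).ne' (fun s' _ => (hppos s').ne')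
    fun s' hs' => hdb s s' (mem_filter.mp hs').2

/-- **GFlowNet classifier consistency, Proposition 2 claim 1.**
Let `pF` be a forward policy with induced, everywhere positive, state-visitation
function `p`, let `pB` be a backward policy (`pB s' s` is the probability
`p_B(s | s')` of predecessor `s` at `s'`) satisfying detailed balance
`p s * pF s s' = p s' * pB s' s` on every edge.  Given nonnegative terminal
conditionals `q` and the joint state–label function `P` defined by
`P x y = p x * q x y` at terminal states and by the backward recursion
`P s y = ∑_{s' : (s,s') ∈ A} pB s' s * P s' y` at non-terminal states, the
conditional `P(y | s) = P s y / p s` satisfies, at every non-terminal `s`,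
`P(y | s) = ∑_{s' : (s,s') ∈ A} pF s s' * P(y | s')`. -/
theorem gflownet_classifier_consistency
    {S Y : Type*} [Fintype S] [Fintype Y]
    (A : S → S → Prop) [DecidableRel A] (s0 : S)
    (hdom : IsGFlowNetDomain A s0)
    (pF : S → S → ℝ) (hpF : IsForwardPolicy A pF)
    (p : S → ℝ) (hp : IsVisitation A s0 pF p) (hppos : ∀ s, 0 < p s)
    (pB : S → S → ℝ)
    (hdb : ∀ s s', A s s' → p s * pF s s' = p s' * pB s' s)
    (q : S → Y → ℝ) (hq : ∀ x y, IsTerminal A x → 0 ≤ q x y)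
    (P : S → Y → ℝ)
    (hPterm : ∀ x y, IsTerminal A x → P x y = p x * q x y)
    (hPrec : ∀ s y, ¬ IsTerminal A s →
      P s y = ∑ s' ∈ univ.filter (fun s' => A s s'), pB s' s * P s' y) :
    ∀ s y, ¬ IsTerminal A s →
      P s y / p s =
        ∑ s' ∈ univ.filter (fun s' => A s s'), pF s s' * (P s' y / p s') :=
  gflownet_classifier_consistency_general A pF p hppos pB hdb P hPrec
end

section
/- (Composed GFlowNet policy, Theorem 1.) Let p_{1,F}, …, p_{m,F} be forward policies on a common GFlowNet domain with induced state-visitation functions p_1, …, p_m satisfying Σ_j p_j(s) > 0 for all s. Let λ_i(s) = p_i(s)/Σ_{j=1}^m p_j(s), and let P(ȳ | s) be a positive function of states (for a fixed observation tuple ȳ = (i_1, …, i_n) ∈ {1,…,m}^n) satisfying P(ȳ | x) = (Π_{k=1}^n p_{i_k}(x)) / (Σ_{j=1}^m p_j(x))^n at terminal states x and P(ȳ | s) = Σ_{s' : (s,s')∈A} [Σ_{i=1}^m λ_i(s) p_{i,F}(s' | s)] P(ȳ | s') at non-terminal states s. Then the forward policy p_F(s' | s, ȳ) = [P(ȳ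 | s')/P(ȳ | s)] Σ_{i=1}^m p_{i,F}(s' | s) λ_i(s) is valid, and its induced state-visitation function restricted to terminal states equals the composition posterior: for every x ∈ X, p_ȳ(x) = (1/(m · P(ȳ | s0))) · (Π_{k=1}^n p_{i_k}(x)) / (Σ_{j=1}^m p_j(x))^{n−1}. -/
open Finset

/-!
Writing `Z s = ∑ⱼ pⱼ(s)`, the recursion for `P` makes the composed policy sum to one, and the
function `s ↦ Z s · P s / (m · P s0)` satisfies the visitation recursion of the composed policy:
the factor `P s / P s*` telescopes and `λᵢ(s*) · Z s* = pᵢ(s*)` turns the recursion into the sum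
of the recursions of the `pᵢ`. On a finite DAG visitation functions are unique, so this is the
visitation function of the composed policy, and at a terminal `x` the boundary value of `P` gives
the posterior.
-/

theorem wellFounded_of_irreflexive_transGen {S : Type*} [Finite S] {A : S → S → Prop}
    (hA : ∀ s, ¬ Relation.TransGen A s s) : WellFounded A :=
  haveI : IsTrans S (Relation.TransGen A) := ⟨fun _ _ _ => Relation.TransGen.trans⟩
  haveI : Std.Irrefl (Relation.TransGen A) := ⟨hA⟩
  Subrelation.wf Relation.TransGen.single (Finite.wellFounded_of_trans_of_irrefl _)

namespace IsVisitation

variable {S : Type*} [Fintype S] {A : S → S → Prop} [DecidableRel A] {s0 : S}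
  {pF : S → S → ℝ} {p q : S → ℝ}

theorem nonneg (hwf : WellFounded A) (hpF : ∀ s s', 0 ≤ pF s s')
    (hp : IsVisitation A s0 pF p) (s : S) : 0 ≤ p s := by
  induction s using hwf.induction with
  | _ s ih =>
    by_cases hs : s = s0
    · simp [hs, hp.1]
    · rw [hp.2 s hs]
      exact sum_nonneg fun sp hsp => mul_nonneg (ih sp (mem_filter.mp hsp).2) (hpF sp s)

theorem unique_s11 (hwf : WellFounded A) (hp : IsVisitation A s0 pF p)
    (hq : IsVisitation A s0 pF q) : p = q := by
  funext s
  induction s using hwf.induction with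
  | _ s ih =>
    by_cases hs : s = s0
    · rw [hs, hp.1, hq.1]
    · rw [hp.2 s hs, hq.2 s hs]
      exact sum_congr rfl fun sp hsp => by rw [ih sp (mem_filter.mp hsp).2]

end IsVisitation

section Composition

variable {S : Type*} [Fintype S] {A : S → S → Prop} [DecidableRel A] {m : ℕ}
  {pF : Fin m → S → S → ℝ} {p : Fin m → S → ℝ} {P : S → ℝ}

/-- The paper's `p_F(s' | s, ȳ)`: the observation tuple `ȳ` enters only through `P = P(ȳ | ·)`. -/
noncomputable def composedPolicy (pF : Fin m → S → S → ℝ) (p : Fin m → S → ℝ) (P : S → ℝ)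
    (s s' : S) : ℝ :=
  (P s' / P s) * ∑ i, pF i s s' * (p i s / ∑ j, p j s)

theorem isForwardPolicy_composedPolicy (hpF : ∀ i, IsForwardPolicy A (pF i))
    (hp : ∀ i s, 0 ≤ p i s) (hP : ∀ s, 0 < P s)
    (hPrec : ∀ s, ¬ IsTerminal A s →
      P s = ∑ s' ∈ univ.filter (fun s' => A s s'),
        (∑ i, (p i s / ∑ j, p j s) * pF i s s') * P s') :
    IsForwardPolicy A (composedPolicy pF p P) := by
  refine ⟨fun s s' => ?_, fun s s' hss' => ?_, fun s hs => ?_⟩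
  · have hZ : 0 ≤ ∑ j, p j s := sum_nonneg fun j _ => hp j s
    exact mul_nonneg (div_nonneg (hP s').le (hP s).le)
      (sum_nonneg fun i _ => mul_nonneg ((hpF i).1 s s') (div_nonneg (hp i s) hZ))
  · simp [composedPolicy, fun i => (hpF i).2.1 s s' hss']
  · have hterm : ∀ s', composedPolicy pF p P s s' =
        (∑ i, (p i s / ∑ j, p j s) * pF i s s') * P s' / P s := fun s' => by
      simp only [composedPolicy, mul_comm (pF _ s s')]
      ring
    simp only [hterm, ← sum_div, ← hPrec s hs, div_self (hP s).ne']

theorem isVisitation_composedPolicy {s0 : S} (hp : ∀ i, IsVisitation A s0 (pF i) (p i))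
    (hm : 0 < m) (hpos : ∀ s, 0 < ∑ j, p j s) (hP : ∀ s, 0 < P s) :
    IsVisitation A s0 (composedPolicy pF p P)
      (fun s => (∑ j, p j s) * P s / (m * P s0)) := by
  have hm0 : (m : ℝ) ≠ 0 := Nat.cast_ne_zero.mpr hm.ne'
  have hP0 := (hP s0).ne'
  refine ⟨?_, fun s hs => ?_⟩
  · simp only [fun j => (hp j).1, sum_const, card_univ, Fintype.card_fin, nsmul_eq_mul, mul_one]
    field_simp
  · have hterm : ∀ sp, (∑ j, p j sp) * P sp / (m * P s0) * composedPolicy pF p P sp s =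
        (∑ i, p i sp * pF i sp s) * P s / (m * P s0) := fun sp => by
      have hmix : ∑ i, pF i sp s * (p i sp / ∑ j, p j sp) =
          (∑ i, p i sp * pF i sp s) / ∑ j, p j sp := by
        rw [sum_div]
        exact sum_congr rfl fun i _ => by ring
      have hPsp := (hP sp).ne'
      have hZsp := (hpos sp).ne'
      rw [composedPolicy, hmix]
      field_simp
    simp only [hterm, ← sum_div, ← sum_mul]
    rw [sum_comm, sum_congr rfl fun i _ => ((hp i).2 s hs).symm]

end Composition

/-- **Composed GFlowNet policy, Theorem 1.**
Let `pF i` be forward policies with state-visitation functions `p i` such that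
`∑ j, p j s > 0` everywhere, let `λ i s = p i s / ∑ j, p j s`, and, for a fixed
observation tuple `ȳ = (ι 1, …, ι n)`, let `P` be a positive function of states
equal to `(∏ k, p (ι k) x) / (∑ j, p j x) ^ n` at terminal states and
satisfying the mixture-policy consistency recursion at non-terminal states.
Then the composed policy
`pF(s' | s, ȳ) = (P s' / P s) * ∑ i, pF i s s' * λ i s` is a valid forward
policy, and its induced state-visitation function at every terminal state `x`
equals the composition posterior
`(1 / (m * P s0)) * (∏ k, p (ι k) x) / (∑ j, p j x) ^ (n - 1)`. -/
theorem composed_gflownet_policy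
    {S : Type*} [Fintype S]
    (A : S → S → Prop) [DecidableRel A] (s0 : S)
    (hdom : IsGFlowNetDomain A s0)
    (m n : ℕ) (hm : 0 < m) (hn : 0 < n)
    (pF : Fin m → S → S → ℝ) (p : Fin m → S → ℝ)
    (hpF : ∀ i, IsForwardPolicy A (pF i))
    (hp : ∀ i, IsVisitation A s0 (pF i) (p i))
    (hpos : ∀ s, 0 < ∑ j, p j s)
    (ι : Fin n → Fin m)
    (P : S → ℝ) (hPpos : ∀ s, 0 < P s)
    (hPterm : ∀ x, IsTerminal A x →
      P x = (∏ k, p (ι k) x) / (∑ j, p j x) ^ n)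
    (hPrec : ∀ s, ¬ IsTerminal A s →
      P s = ∑ s' ∈ univ.filter (fun s' => A s s'),
        (∑ i, (p i s / ∑ j, p j s) * pF i s s') * P s') :
    IsForwardPolicy A
      (fun s s' => (P s' / P s) * ∑ i, pF i s s' * (p i s / ∑ j, p j s)) ∧
    ∀ pc : S → ℝ,
      IsVisitation A s0
        (fun s s' => (P s' / P s) * ∑ i, pF i s s' * (p i s / ∑ j, p j s)) pc →
      ∀ x, IsTerminal A x →
        pc x = (1 / (m * P s0)) *
          ((∏ k, p (ι k) x) / (∑ j, p j x) ^ (n - 1)) := by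
  have hwf : WellFounded A := wellFounded_of_irreflexive_transGen hdom.1
  have hpnn : ∀ i s, 0 ≤ p i s := fun i => (hp i).nonneg hwf (hpF i).1
  refine ⟨isForwardPolicy_composedPolicy hpF hpnn hPpos hPrec, fun pc hpc x hx => ?_⟩
  have hpc_eq := hpc.unique_s11 hwf (isVisitation_composedPolicy hp hm hpos hPpos)
  rw [congrFun hpc_eq x, hPterm x hx]
  obtain ⟨k, rfl⟩ : ∃ k, n = k + 1 := ⟨n - 1, by omega⟩
  have hZx := (hpos x).ne'
  simp only [Nat.add_sub_cancel]
  field_simp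
  ring
end

section
/- (Proposition B.1, claim 2: the negation of Gaussians can be non-normalizable.) Let γ ∈ (0,1), μ1, μ2 ∈ ℝ, and σ1, σ2 > 0 satisfy σ1² ≥ σ2²/γ. Let p_i(x) = (1/√(2π σ_i²)) exp(−(x−μ_i)²/(2σ_i²)) for i = 1, 2 be the Gaussian probability density functions. Then ∫_ℝ p1(x)/(p2(x))^γ dx = ∞, i.e. the function p1/p2^γ is not integrable over ℝ. -/
/-!
After taking logarithms, `p₁ / p₂ ^ γ` is `C · exp q` for a constant `C > 0` and a quadratic
`q x = a x² + b x + c` whose leading coefficient `a = γ / (2σ₂²) - 1 / (2σ₁²)` is nonnegative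
exactly when `σ₁² ≥ σ₂² / γ`. Then `q ≥ c` on the half-line where `b x ≥ 0`, so the integrand
is bounded below by `C · exp c > 0` on a set of infinite measure.
-/

open MeasureTheory Real Set

lemma lintegral_ofReal_eq_top_of_forall_mem_le {α : Type*} [MeasurableSpace α] {μ : Measure α}
    {f : α → ℝ} {s : Set α} {ε : ℝ} (hε : 0 < ε) (hs : MeasurableSet s) (hμs : μ s = ⊤)
    (hf : ∀ x ∈ s, ε ≤ f x) : ∫⁻ x, ENNReal.ofReal (f x) ∂μ = ⊤ :=
  eq_top_iff.mpr <| calc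
    ⊤ = ∫⁻ _ in s, ENNReal.ofReal ε ∂μ := by
      rw [setLIntegral_const, hμs, ENNReal.mul_top (by simpa using hε)]
    _ ≤ ∫⁻ x in s, ENNReal.ofReal (f x) ∂μ :=
      setLIntegral_mono' hs fun x hx => ENNReal.ofReal_le_ofReal (hf x hx)
    _ ≤ ∫⁻ x, ENNReal.ofReal (f x) ∂μ := setLIntegral_le_lintegral _ _

lemma lintegral_ofReal_mul_exp_quadratic_eq_top {a C : ℝ} (b c : ℝ) (ha : 0 ≤ a) (hC : 0 < C) :
    ∫⁻ x : ℝ, ENNReal.ofReal (C * exp (a * x ^ 2 + b * x + c)) = ⊤ := by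
  obtain ⟨s, hs, hvol, hbs⟩ :
      ∃ s : Set ℝ, MeasurableSet s ∧ volume s = ⊤ ∧ ∀ x ∈ s, 0 ≤ b * x := by
    rcases le_total 0 b with hb | hb
    · exact ⟨Ici 0, measurableSet_Ici, volume_Ici, fun x hx => mul_nonneg hb hx⟩
    · exact ⟨Iic 0, measurableSet_Iic, volume_Iic,
        fun x hx => mul_nonneg_of_nonpos_of_nonpos hb hx⟩
  refine lintegral_ofReal_eq_top_of_forall_mem_le (mul_pos hC (exp_pos c)) hs hvol
    fun x hx => ?_
  gcongr
  nlinarith [hbs x hx, mul_nonneg ha (sq_nonneg x)]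

lemma gaussian_div_rpow_gaussian_eq (γ μ1 μ2 σ1 σ2 x : ℝ) :
    ((1 / √(2 * π * σ1 ^ 2)) * exp (-(x - μ1) ^ 2 / (2 * σ1 ^ 2))) /
        ((1 / √(2 * π * σ2 ^ 2)) * exp (-(x - μ2) ^ 2 / (2 * σ2 ^ 2))) ^ γ =
      √(2 * π * σ2 ^ 2) ^ γ / √(2 * π * σ1 ^ 2) *
        exp ((γ / (2 * σ2 ^ 2) - 1 / (2 * σ1 ^ 2)) * x ^ 2 +
          (μ1 / σ1 ^ 2 - γ * μ2 / σ2 ^ 2) * x +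
          (γ * μ2 ^ 2 / (2 * σ2 ^ 2) - μ1 ^ 2 / (2 * σ1 ^ 2))) := by
  have hexponent : -(x - μ1) ^ 2 / (2 * σ1 ^ 2) - γ * (-(x - μ2) ^ 2 / (2 * σ2 ^ 2)) =
      (γ / (2 * σ2 ^ 2) - 1 / (2 * σ1 ^ 2)) * x ^ 2 + (μ1 / σ1 ^ 2 - γ * μ2 / σ2 ^ 2) * x +
        (γ * μ2 ^ 2 / (2 * σ2 ^ 2) - μ1 ^ 2 / (2 * σ1 ^ 2)) := by
    ring
  rw [← hexponent, exp_sub, mul_rpow (by positivity) (exp_pos _).le,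
    div_rpow zero_le_one (sqrt_nonneg _), one_rpow, ← exp_mul, mul_comm _ γ]
  field_simp

theorem gaussian_negation_not_normalizable_general
    (γ μ1 μ2 σ1 σ2 : ℝ) (hγ : γ ∈ Set.Ioo (0 : ℝ) 1)
    (hσ2 : 0 < σ2)
    (hvar : σ2 ^ 2 / γ ≤ σ1 ^ 2) :
    (∫⁻ x : ℝ, ENNReal.ofReal
        (((1 / Real.sqrt (2 * π * σ1 ^ 2)) * Real.exp (-(x - μ1) ^ 2 / (2 * σ1 ^ 2))) /
          ((1 / Real.sqrt (2 * π * σ2 ^ 2)) * Real.exp (-(x - μ2) ^ 2 / (2 * σ2 ^ 2))) ^ γ)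
      = ⊤) ∧
    ¬ Integrable (fun x : ℝ =>
        ((1 / Real.sqrt (2 * π * σ1 ^ 2)) * Real.exp (-(x - μ1) ^ 2 / (2 * σ1 ^ 2))) /
          ((1 / Real.sqrt (2 * π * σ2 ^ 2)) * Real.exp (-(x - μ2) ^ 2 / (2 * σ2 ^ 2))) ^ γ) := by
  have hratio : 0 < σ2 ^ 2 / γ := div_pos (pow_pos hσ2 2) hγ.1
  have hσ1 : σ1 ≠ 0 := by rintro rfl; linarith
  have hquad : 0 ≤ γ / (2 * σ2 ^ 2) - 1 / (2 * σ1 ^ 2) := by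
    have h := one_div_le_one_div_of_le hratio hvar
    rw [one_div_div] at h
    rw [show γ / (2 * σ2 ^ 2) - 1 / (2 * σ1 ^ 2) = (γ / σ2 ^ 2 - 1 / σ1 ^ 2) / 2 by ring]
    exact div_nonneg (sub_nonneg.2 h) zero_le_two
  have hC : 0 < √(2 * π * σ2 ^ 2) ^ γ / √(2 * π * σ1 ^ 2) := by
    have := pi_pos
    positivity
  have htop := lintegral_ofReal_mul_exp_quadratic_eq_top (μ1 / σ1 ^ 2 - γ * μ2 / σ2 ^ 2)
    (γ * μ2 ^ 2 / (2 * σ2 ^ 2) - μ1 ^ 2 / (2 * σ1 ^ 2)) hquad hC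
  simp_rw [← gaussian_div_rpow_gaussian_eq] at htop
  exact ⟨htop, fun h => h.lintegral_lt_top.ne htop⟩

/-- **Proposition B.1, claim 2.** Let `γ ∈ (0,1)` and let
`p1, p2` be Gaussian densities with means `μ1, μ2` and variances `σ1², σ2²`
satisfying `σ1² ≥ σ2²/γ`.  Then the negation `p1 / p2 ^ γ` has infinite
integral over `ℝ`, i.e. it is not integrable (the function being nonnegative,
this is expressed via the Lebesgue integral of its `ℝ≥0∞`-coercion being `∞`
and via failure of integrability). -/
theorem gaussian_negation_not_normalizable
    (γ μ1 μ2 σ1 σ2 : ℝ) (hγ : γ ∈ Set.Ioo (0 : ℝ) 1)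
    (hσ1 : 0 < σ1) (hσ2 : 0 < σ2)
    (hvar : σ2 ^ 2 / γ ≤ σ1 ^ 2) :
    (∫⁻ x : ℝ, ENNReal.ofReal
        (((1 / Real.sqrt (2 * π * σ1 ^ 2)) * Real.exp (-(x - μ1) ^ 2 / (2 * σ1 ^ 2))) /
          ((1 / Real.sqrt (2 * π * σ2 ^ 2)) * Real.exp (-(x - μ2) ^ 2 / (2 * σ2 ^ 2))) ^ γ)
      = ⊤) ∧
    ¬ Integrable (fun x : ℝ =>
        ((1 / Real.sqrt (2 * π * σ1 ^ 2)) * Real.exp (-(x - μ1) ^ 2 / (2 * σ1 ^ 2))) /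
          ((1 / Real.sqrt (2 * π * σ2 ^ 2)) * Real.exp (-(x - μ2) ^ 2 / (2 * σ2 ^ 2))) ^ γ) :=
  gaussian_negation_not_normalizable_general γ μ1 μ2 σ1 σ2 hγ hσ2 hvar
end
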